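/- arXiv:1208.2823 — 3 statements merged into one kernel-verified Lean document; each statement's English description precedes it below -/
import Mathlib

section
/- The decomposition of a real subspace of ℂ^n into subspaces of constant Kähler angle is unique: if V = V_1 ⊕ ⋯ ⊕ V_r and V = W_1 ⊕ ⋯ ⊕ W_s are two families of nonzero real subspaces of ℂ^n such that each family is an orthogonal direct sum decomposition of V, each V_i has constant Kähler angle φ_i with φ_1 < ⋯ < φ_r, each W_j has constant Kähler angle ψ_j with ψ_1 < ⋯ < ψ_s (all angles in [0, π/2]), and in each family the Hermitian inner product ⟪v, w⟫ vanishes for vectors from distinct members, then r = s, φ_i = ψ_i for all i, and V_i = W_i for all i. -/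
noncomputable section

/-- `ℂ^n` as a Euclidean space. -/
abbrev En (n : ℕ) : Type := EuclideanSpace ℂ (Fin n)

/-- The complex structure `J`, multiplication by `i`. -/
def Jc {n : ℕ} (x : En n) : En n := Complex.I • x

/-- A real subspace `V` of `ℂ^n` has constant Kähler angle `φ` if
`‖π_V (J v)‖² = cos²(φ) ‖v‖²` for all `v ∈ V`. -/
def HasConstKahlerAngle {n : ℕ} (V : Submodule ℝ (En n)) (φ : ℝ) : Prop :=
  ∀ v ∈ V, ‖(V.orthogonalProjectionOnto (Jc v) : En n)‖ ^ 2 = Real.cos φ ^ 2 * ‖v‖ ^ 2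


/-!
On `V` put `P = π_V ∘ J`. If `V = ⨁ Vᵢ` is a Kähler angle decomposition, Hermitian orthogonality
of the pieces makes `P` map each `Vᵢ` into itself, and polarizing the constant-angle condition gives
`⟪P v, P u⟫ = cos² φᵢ ⟪v, u⟫` for `v ∈ Vᵢ`, `u ∈ V`. So `Vᵢ` is exactly the `cos² φᵢ`-eigenspace of
the self-adjoint operator `-P²`, and the `cos² φᵢ` are all of its eigenvalues. As `cos²` is
injective on `[0, π/2]`, the angles and the pieces are determined by `V` alone.
-/

open Set

namespace Submodule

variable {𝕜 E ι : Type*} [RCLike 𝕜] [NormedAddCommGroup E] [InnerProductSpace 𝕜 E]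
  {U : ι → Submodule 𝕜 E}

theorem inner_eq_zero_of_mem_iSup {x u : E} (hx : ∀ k, ∀ w ∈ U k, inner 𝕜 x w = 0)
    (hu : u ∈ ⨆ k, U k) : inner 𝕜 x u = 0 := by
  have hx' : x ∈ (⨆ k, U k)ᗮ := by
    rw [← iInf_orthogonal, mem_iInf]
    exact fun k => (mem_orthogonal' _ _).2 (hx k)
  exact (mem_orthogonal' _ _).1 hx' u hu

theorem mem_of_mem_iSup_of_inner_eq_zero
    (hU : ∀ k l, k ≠ l → ∀ v ∈ U k, ∀ w ∈ U l, inner 𝕜 v w = 0)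
    {k : ι} [(U k).HasOrthogonalProjection] {v : E} (hv : v ∈ ⨆ l, U l)
    (hvU : ∀ l, l ≠ k → ∀ w ∈ U l, inner 𝕜 v w = 0) : v ∈ U k := by
  have hp : (U k).starProjection v ∈ U k := (U k).starProjection_apply_mem v
  have hperp : ∀ l, ∀ w ∈ U l, inner 𝕜 (v - (U k).starProjection v) w = 0 := by
    intro l w hw
    by_cases hl : l = k
    · subst hl
      exact starProjection_inner_eq_zero v w hw
    · rw [inner_sub_left, hvU l hl w hw, hU k l (Ne.symm hl) _ hp w hw, sub_zero]
  have hzero : v - (U k).starProjection v = 0 :=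
    inner_self_eq_zero.1 (inner_eq_zero_of_mem_iSup hperp (sub_mem hv (mem_iSup_of_mem k hp)))
  rwa [sub_eq_zero.1 hzero]

end Submodule

theorem StrictMono.exists_eq_cast_of_range_eq {α : Type*} [LinearOrder α] {r s : ℕ}
    {f : Fin r → α} {g : Fin s → α} (hf : StrictMono f) (hg : StrictMono g)
    (hfg : range f = range g) : ∃ h : r = s, ∀ i, f i = g (Fin.cast h i) := by
  have hrs : r = s := by
    have hcard := Nat.card_range_of_injective hf.injective
    rw [hfg, Nat.card_range_of_injective hg.injective] at hcard
    simpa using hcard.symm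
  subst hrs
  exact ⟨rfl, fun i => by rw [(hf.range_inj hg).1 hfg, Fin.cast_eq_self]⟩

open Real in
theorem Real.injOn_cos_sq : InjOn (fun t => cos t ^ 2) (Icc 0 (π / 2)) := by
  intro a ha b hb hab
  have hcos : ∀ t ∈ Icc 0 (π / 2), 0 ≤ cos t := fun t ht =>
    cos_nonneg_of_mem_Icc ⟨by linarith [pi_pos, ht.1], ht.2⟩
  refine injOn_cos ⟨ha.1, by linarith [ha.2, pi_pos]⟩ ⟨hb.1, by linarith [hb.2, pi_pos]⟩ ?_
  exact (sq_eq_sq₀ (hcos a ha) (hcos b hb)).1 hab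

namespace EuclideanSpace

variable {ι : Type*} [Fintype ι]

theorem real_inner_eq_re_inner (x y : EuclideanSpace ℂ ι) : inner ℝ x y = (inner ℂ x y).re := by
  rw [PiLp.inner_apply, PiLp.inner_apply, Complex.re_sum]
  rfl

theorem real_inner_eq_zero_of_inner_eq_zero {x y : EuclideanSpace ℂ ι} (h : inner ℂ x y = 0) :
    inner ℝ x y = 0 := by
  rw [real_inner_eq_re_inner, h, Complex.zero_re]

end EuclideanSpace

section Kahler

variable {n : ℕ}

theorem Jc_add (x y : En n) : Jc (x + y) = Jc x + Jc y := smul_add _ _ _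

theorem real_inner_Jc_eq_zero_of_inner_eq_zero {x y : En n} (h : inner ℂ x y = 0) :
    inner ℝ (Jc x) y = 0 := by
  rw [Jc, EuclideanSpace.real_inner_eq_re_inner, inner_smul_left, h, mul_zero, Complex.zero_re]

/-- The eigenvalue equation of `-(π_V J)²` on `V`, in weak form; `0` satisfies it for every `c`. -/
def IsKahlerEigenvector (V : Submodule ℝ (En n)) (c : ℝ) (v : En n) : Prop :=
  v ∈ V ∧ ∀ u ∈ V, inner ℝ (V.starProjection (Jc v)) (V.starProjection (Jc u)) = c * inner ℝ v u

theorem IsKahlerEigenvector.inner_eq_zero {V : Submodule ℝ (En n)} {c d : ℝ} {v w : En n}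
    (hv : IsKahlerEigenvector V c v) (hw : IsKahlerEigenvector V d w) (hcd : c ≠ d) :
    inner ℝ v w = 0 := by
  have h := (hv.2 w hw.1).symm.trans ((real_inner_comm _ _).trans (hw.2 v hv.1))
  rw [real_inner_comm v w] at h
  exact (mul_eq_mul_right_iff.1 h).resolve_left hcd

structure IsKahlerDecomposition {ι : Type*} (V : Submodule ℝ (En n)) (U : ι → Submodule ℝ (En n))
    (θ : ι → ℝ) : Prop where
  eq_iSup : V = ⨆ k, U k
  inner_eq_zero : ∀ k l, k ≠ l → ∀ v ∈ U k, ∀ w ∈ U l, inner ℂ v w = 0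
  hasConstKahlerAngle : ∀ k, HasConstKahlerAngle (U k) (θ k)

namespace IsKahlerDecomposition

variable {ι : Type*} {V : Submodule ℝ (En n)} {U : ι → Submodule ℝ (En n)} {θ : ι → ℝ}
  (hU : IsKahlerDecomposition V U θ)
include hU

theorem le (k : ι) : U k ≤ V := hU.eq_iSup ▸ le_iSup U k

theorem real_inner_eq_zero : ∀ k l, k ≠ l → ∀ v ∈ U k, ∀ w ∈ U l, inner ℝ v w = 0 :=
  fun k l hkl v hv w hw =>
    EuclideanSpace.real_inner_eq_zero_of_inner_eq_zero (hU.inner_eq_zero k l hkl v hv w hw)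

theorem starProjection_Jc {k : ι} {w : En n} (hw : w ∈ U k) :
    V.starProjection (Jc w) = (U k).starProjection (Jc w) := by
  refine Submodule.eq_starProjection_of_mem_of_inner_eq_zero
    (hU.le k ((U k).starProjection_apply_mem _)) fun z hz => ?_
  rw [hU.eq_iSup] at hz
  refine Submodule.inner_eq_zero_of_mem_iSup (fun l z hz => ?_) hz
  by_cases hl : l = k
  · subst hl
    exact Submodule.starProjection_inner_eq_zero _ z hz
  · rw [inner_sub_left, real_inner_Jc_eq_zero_of_inner_eq_zero
      (hU.inner_eq_zero k l (Ne.symm hl) w hw z hz),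
      hU.real_inner_eq_zero k l (Ne.symm hl) _ ((U k).starProjection_apply_mem _) z hz, sub_zero]

theorem starProjection_Jc_mem {k : ι} {w : En n} (hw : w ∈ U k) :
    V.starProjection (Jc w) ∈ U k :=
  hU.starProjection_Jc hw ▸ (U k).starProjection_apply_mem _

theorem inner_starProjection_Jc_of_mem_same {k : ι} {w₁ w₂ : En n} (h₁ : w₁ ∈ U k)
    (h₂ : w₂ ∈ U k) :
    inner ℝ (V.starProjection (Jc w₁)) (V.starProjection (Jc w₂))
      = Real.cos (θ k) ^ 2 * inner ℝ w₁ w₂ := by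
  have hnorm : ∀ w ∈ U k, ‖V.starProjection (Jc w)‖ ^ 2 = Real.cos (θ k) ^ 2 * ‖w‖ ^ 2 :=
    fun w hw => hU.starProjection_Jc hw ▸ hU.hasConstKahlerAngle k w hw
  have h12 := hnorm (w₁ + w₂) (add_mem h₁ h₂)
  rw [Jc_add, map_add, norm_add_sq_real, norm_add_sq_real] at h12
  linear_combination (h12 - hnorm w₁ h₁ - hnorm w₂ h₂) / 2

theorem isKahlerEigenvector_of_mem {k : ι} {v : En n} (hv : v ∈ U k) :
    IsKahlerEigenvector V (Real.cos (θ k) ^ 2) v := by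
  refine ⟨hU.le k hv, fun u hu => ?_⟩
  rw [hU.eq_iSup] at hu
  induction hu using Submodule.iSup_induction' with
  | mem l w hw =>
    by_cases hl : l = k
    · subst hl
      exact hU.inner_starProjection_Jc_of_mem_same hv hw
    · rw [hU.real_inner_eq_zero k l (Ne.symm hl) _ (hU.starProjection_Jc_mem hv) _
        (hU.starProjection_Jc_mem hw), hU.real_inner_eq_zero k l (Ne.symm hl) v hv w hw, mul_zero]
  | zero => simp [Jc]
  | add x y _ _ hx hy => rw [Jc_add, map_add, inner_add_right, inner_add_right, hx, hy, mul_add]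

theorem mem_of_isKahlerEigenvector (hθ : Function.Injective fun k => Real.cos (θ k) ^ 2)
    {k : ι} {v : En n} (hv : IsKahlerEigenvector V (Real.cos (θ k) ^ 2) v) : v ∈ U k := by
  have hvU : v ∈ ⨆ l, U l := hU.eq_iSup ▸ hv.1
  refine Submodule.mem_of_mem_iSup_of_inner_eq_zero hU.real_inner_eq_zero hvU fun l hl w hw => ?_
  exact hv.inner_eq_zero (hU.isKahlerEigenvector_of_mem hw) (hθ.ne (Ne.symm hl))

theorem mem_iff_isKahlerEigenvector (hθ : Function.Injective fun k => Real.cos (θ k) ^ 2)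
    {k : ι} {v : En n} : v ∈ U k ↔ IsKahlerEigenvector V (Real.cos (θ k) ^ 2) v :=
  ⟨hU.isKahlerEigenvector_of_mem, hU.mem_of_isKahlerEigenvector hθ⟩

theorem exists_eq_cos_sq_of_isKahlerEigenvector {c : ℝ} {v : En n}
    (hv : IsKahlerEigenvector V c v) (hv0 : v ≠ 0) : ∃ k, c = Real.cos (θ k) ^ 2 := by
  by_contra! hc
  have hvU : v ∈ ⨆ l, U l := hU.eq_iSup ▸ hv.1
  refine hv0 (inner_self_eq_zero.1 (Submodule.inner_eq_zero_of_mem_iSup (fun k w hw => ?_) hvU))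
  exact hv.inner_eq_zero (hU.isKahlerEigenvector_of_mem hw) (hc k)

theorem range_subset {κ : Type*} {U' : κ → Submodule ℝ (En n)} {θ' : κ → ℝ}
    (hU' : IsKahlerDecomposition V U' θ') (hne : ∀ k, U k ≠ ⊥)
    (hθ : ∀ k, θ k ∈ Icc 0 (Real.pi / 2)) (hθ' : ∀ l, θ' l ∈ Icc 0 (Real.pi / 2)) :
    range θ ⊆ range θ' := by
  rintro _ ⟨k, rfl⟩
  obtain ⟨v, hv, hv0⟩ := Submodule.exists_mem_ne_zero_of_ne_bot (hne k)
  obtain ⟨l, hl⟩ :=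
    hU'.exists_eq_cos_sq_of_isKahlerEigenvector (hU.isKahlerEigenvector_of_mem hv) hv0
  exact ⟨l, Real.injOn_cos_sq (hθ' l) (hθ k) hl.symm⟩

end IsKahlerDecomposition

end Kahler

theorem kahler_angle_decomposition_unique_general (n : ℕ) (V : Submodule ℝ (En n))
    (r s : ℕ) (Vs : Fin r → Submodule ℝ (En n)) (Ws : Fin s → Submodule ℝ (En n))
    (φ : Fin r → ℝ) (ψ : Fin s → ℝ)
    (hφ : ∀ i, 0 ≤ φ i ∧ φ i ≤ Real.pi / 2)
    (hψ : ∀ j, 0 ≤ ψ j ∧ ψ j ≤ Real.pi / 2)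
    (hφmono : StrictMono φ) (hψmono : StrictMono ψ)
    (hVne : ∀ i, Vs i ≠ ⊥) (hWne : ∀ j, Ws j ≠ ⊥)
    (hVsum : V = ⨆ i, Vs i) (hWsum : V = ⨆ j, Ws j)
    (hVangle : ∀ i, HasConstKahlerAngle (Vs i) (φ i))
    (hWangle : ∀ j, HasConstKahlerAngle (Ws j) (ψ j))
    (hVherm : ∀ i j, i ≠ j → ∀ v ∈ Vs i, ∀ w ∈ Vs j, (inner ℂ v w : ℂ) = 0)
    (hWherm : ∀ i j, i ≠ j → ∀ v ∈ Ws i, ∀ w ∈ Ws j, (inner ℂ v w : ℂ) = 0) :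
    ∃ h : r = s, (∀ i : Fin r, φ i = ψ (Fin.cast h i)) ∧
      (∀ i : Fin r, Vs i = Ws (Fin.cast h i)) := by
  have hV : IsKahlerDecomposition V Vs φ := ⟨hVsum, hVherm, hVangle⟩
  have hW : IsKahlerDecomposition V Ws ψ := ⟨hWsum, hWherm, hWangle⟩
  have hφinj : Function.Injective fun i => Real.cos (φ i) ^ 2 :=
    fun i j h => hφmono.injective (Real.injOn_cos_sq (hφ i) (hφ j) h)
  have hψinj : Function.Injective fun j => Real.cos (ψ j) ^ 2 :=
    fun i j h => hψmono.injective (Real.injOn_cos_sq (hψ i) (hψ j) h)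
  obtain ⟨hrs, hφψ⟩ := hφmono.exists_eq_cast_of_range_eq hψmono
    ((hV.range_subset hW hVne hφ hψ).antisymm (hW.range_subset hV hWne hψ hφ))
  refine ⟨hrs, hφψ, fun i => ?_⟩
  ext v
  rw [hV.mem_iff_isKahlerEigenvector hφinj, hW.mem_iff_isKahlerEigenvector hψinj, hφψ i]

/-- Uniqueness of the Kähler angle decomposition of a real subspace of `ℂ^n`. -/
theorem kahler_angle_decomposition_unique (n : ℕ) (V : Submodule ℝ (En n))
    (r s : ℕ) (Vs : Fin r → Submodule ℝ (En n)) (Ws : Fin s → Submodule ℝ (En n))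
    (φ : Fin r → ℝ) (ψ : Fin s → ℝ)
    (hφ : ∀ i, 0 ≤ φ i ∧ φ i ≤ Real.pi / 2)
    (hψ : ∀ j, 0 ≤ ψ j ∧ ψ j ≤ Real.pi / 2)
    (hφmono : StrictMono φ) (hψmono : StrictMono ψ)
    (hVne : ∀ i, Vs i ≠ ⊥) (hWne : ∀ j, Ws j ≠ ⊥)
    (hVsum : V = ⨆ i, Vs i) (hWsum : V = ⨆ j, Ws j)
    (hVorth : ∀ i j, i ≠ j → ∀ v ∈ Vs i, ∀ w ∈ Vs j, (inner ℝ v w : ℝ) = 0)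
    (hWorth : ∀ i j, i ≠ j → ∀ v ∈ Ws i, ∀ w ∈ Ws j, (inner ℝ v w : ℝ) = 0)
    (hVangle : ∀ i, HasConstKahlerAngle (Vs i) (φ i))
    (hWangle : ∀ j, HasConstKahlerAngle (Ws j) (ψ j))
    (hVherm : ∀ i j, i ≠ j → ∀ v ∈ Vs i, ∀ w ∈ Vs j, (inner ℂ v w : ℂ) = 0)
    (hWherm : ∀ i j, i ≠ j → ∀ v ∈ Ws i, ∀ w ∈ Ws j, (inner ℂ v w : ℂ) = 0) :
    ∃ h : r = s, (∀ i : Fin r, φ i = ψ (Fin.cast h i)) ∧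
      (∀ i : Fin r, Vs i = Ws (Fin.cast h i)) :=
  kahler_angle_decomposition_unique_general n V r s Vs Ws φ ψ hφ hψ hφmono hψmono hVne hWne hVsum
    hWsum hVangle hWangle hVherm hWherm
end
end

section
/- Let V be a real subspace of ℂ^n and let P : V → V be the real-linear endomorphism P v = π_V(Jv). If v, w ∈ V are eigenvectors of −P² for distinct eigenvalues (i.e. −P²v = c·v, −P²w = c'·w with c ≠ c'), then the Hermitian inner product ⟪v, w⟫ vanishes; in particular ⟨v, w⟩ = 0, ⟨Jv, w⟩ = 0, and ⟨Jv, Jw⟩ = 0. -/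
open Complex

section ComplexStructure

variable {E : Type*} [NormedAddCommGroup E] [InnerProductSpace ℂ E] [InnerProductSpace ℝ E]

-- No compatibility assumption is needed: both inner products are the polarization of the norm.
theorem real_inner_eq_re_inner_complex (x y : E) : inner ℝ x y = (inner ℂ x y).re := by
  rw [real_inner_eq_norm_add_mul_self_sub_norm_mul_self_sub_norm_mul_self_div_two]
  exact (re_inner_eq_norm_add_mul_self_sub_norm_mul_self_sub_norm_mul_self_div_two (𝕜 := ℂ) x y).symm

theorem real_inner_I_smul_left (x y : E) : inner ℝ (I • x) y = (inner ℂ x y).im := by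
  simp [real_inner_eq_re_inner_complex]

theorem real_inner_I_smul_right (x y : E) : inner ℝ x (I • y) = -(inner ℂ x y).im := by
  simp [real_inner_eq_re_inner_complex]

theorem real_inner_I_smul_left_eq_neg (x y : E) : inner ℝ (I • x) y = -inner ℝ x (I • y) := by
  rw [real_inner_I_smul_left, real_inner_I_smul_right, neg_neg]

theorem real_inner_I_smul_I_smul (x y : E) : inner ℝ (I • x) (I • y) = inner ℝ x y := by
  simp [real_inner_eq_re_inner_complex]

theorem inner_eq_zero_of_real_inner_eq_zero {x y : E} (h : inner ℝ x y = 0)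
    (hI : inner ℝ (I • x) y = 0) : inner ℂ x y = 0 := by
  rw [real_inner_eq_re_inner_complex] at h
  rw [real_inner_I_smul_left] at hI
  exact Complex.ext h hI

end ComplexStructure

section SkewCompression

variable {F : Type*} [NormedAddCommGroup F] [InnerProductSpace ℝ F]

theorem Submodule.inner_compression_left_eq_neg {K : Submodule ℝ F} [K.HasOrthogonalProjection]
    {T : F → F} (hT : ∀ x y, inner ℝ (T x) y = -inner ℝ x (T y))
    {P : K →ₗ[ℝ] K} (hP : ∀ u : K, P u = K.orthogonalProjectionOnto (T u)) (u z : K) :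
    inner ℝ (P u) z = -inner ℝ u (P z) := by
  rw [hP, hP, Submodule.inner_orthogonalProjectionOnto_eq_of_mem_right,
    Submodule.inner_orthogonalProjectionOnto_eq_of_mem_left, hT]

theorem LinearMap.isSymmetric_neg_comp_self {P : F →ₗ[ℝ] F}
    (hP : ∀ u z, inner ℝ (P u) z = -inner ℝ u (P z)) : (-(P ∘ₗ P)).IsSymmetric := by
  intro u z
  simp only [LinearMap.neg_apply, LinearMap.comp_apply]
  rw [inner_neg_left, inner_neg_right, hP, hP, neg_neg]

theorem LinearMap.IsSymmetric.inner_eq_zero_of_eigenvalues_ne {A : F →ₗ[ℝ] F}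
    (hA : A.IsSymmetric) {v w : F} {c c' : ℝ} (hc : c ≠ c')
    (hv : A v = c • v) (hw : A w = c' • w) : inner ℝ v w = 0 :=
  (hA.orthogonalFamily_eigenspaces.pairwise hc).inner_eq (Module.End.mem_eigenspace_iff.2 hv)
    (Module.End.mem_eigenspace_iff.2 hw)

end SkewCompression

/-- Eigenvectors of `-P² = -(π_V ∘ J)²` for distinct eigenvalues are
Hermitian-orthogonal; in particular they are orthogonal for the real inner
product, and so are their images under `J`. -/
theorem hermitian_orthogonality_of_distinct_eigenvalues (n : ℕ)
    (V : Submodule ℝ (En n))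
    (P : V →ₗ[ℝ] V) (hP : ∀ u : V, P u = V.orthogonalProjection (Jc (u : En n)))
    (v w : V) (c c' : ℝ) (hc : c ≠ c')
    (hv : (-(P ∘ₗ P)) v = c • v) (hw : (-(P ∘ₗ P)) w = c' • w) :
    (inner ℂ (v : En n) (w : En n) : ℂ) = 0 ∧
    (inner ℝ (v : En n) (w : En n) : ℝ) = 0 ∧
    (inner ℝ (Jc (v : En n)) (w : En n) : ℝ) = 0 ∧
    (inner ℝ (Jc (v : En n)) (Jc (w : En n)) : ℝ) = 0 := by
  have hA := LinearMap.isSymmetric_neg_comp_self (F := V)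
    (V.inner_compression_left_eq_neg (T := Jc) (fun x y => real_inner_I_smul_left_eq_neg x y) hP)
  have hvw : inner ℝ (v : En n) w = 0 := hA.inner_eq_zero_of_eigenvalues_ne hc hv hw
  have hPv : (-(P ∘ₗ P)) (P v) = c • P v := by
    rw [← map_smul, ← hv]
    simp only [LinearMap.neg_apply, LinearMap.comp_apply, map_neg]
  have hJvw : inner ℝ (Jc (v : En n)) w = 0 := by
    have hPvw := hA.inner_eq_zero_of_eigenvalues_ne hc hPv hw
    rw [Submodule.coe_inner, hP] at hPvw
    rwa [← V.inner_orthogonalProjectionOnto_eq_of_mem_right]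
  exact ⟨inner_eq_zero_of_real_inner_eq_zero hvw hJvw, hvw, hJvw,
    by rw [Jc, Jc, real_inner_I_smul_I_smul, hvw]⟩
end

section
/- Let V be a real subspace of ℂ^n of constant Kähler angle φ with φ ∈ (0, π/2]. Then the orthogonal complement of V inside its complex span, W = ℂV ⊖ V (taken with respect to the real inner product), has the same real dimension as V and also has constant Kähler angle φ. -/
noncomputable section

/-- The complex span of a real subspace of `ℂ^n`, viewed as a real subspace. -/
def CSpan {n : ℕ} (V : Submodule ℝ (En n)) : Submodule ℝ (En n) :=
  (Submodule.span ℂ (V : Set (En n))).restrictScalars ℝ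

/-!
Let `F v = π_{Vᗮ} (J v)` be the normal part of `J` on `V`. By Pythagoras
`‖F v‖² = sin² φ ‖v‖²`, so `F` is injective when `sin φ ≠ 0`, and since `ℂV = V + JV` its image
is exactly `W = ℂV ⊖ V`. For `w = F v` one computes `J w + F (π_V (J v)) ∈ V ⊆ Wᗮ`, hence
`‖π_W (J w)‖² = sin² φ cos² φ ‖v‖² = cos² φ ‖w‖²`.
-/

open Submodule

section NormalPart

variable {E : Type*} [NormedAddCommGroup E] [InnerProductSpace ℝ E]
  (J : E →ₗᵢ[ℝ] E) (V : Submodule ℝ E) [V.HasOrthogonalProjection]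

def normalJ : V →ₗ[ℝ] E :=
  Vᗮ.starProjection.toLinearMap ∘ₗ J.toLinearMap ∘ₗ V.subtype

@[simp] lemma normalJ_apply (v : V) : normalJ J V v = Vᗮ.starProjection (J v) := rfl

lemma norm_sq_normalJ (v : V) :
    ‖normalJ J V v‖ ^ 2 = ‖(v : E)‖ ^ 2 - ‖V.starProjection (J v)‖ ^ 2 := by
  rw [normalJ_apply, ← J.norm_map (v : E), norm_sq_eq_add_norm_sq_starProjection (J v) V]
  ring

lemma range_normalJ : LinearMap.range (normalJ J V) = (V ⊔ V.map J.toLinearMap) ⊓ Vᗮ := by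
  apply le_antisymm
  · rintro _ ⟨v, rfl⟩
    refine ⟨?_, starProjection_apply_mem _ _⟩
    rw [normalJ_apply, starProjection_orthogonal_val]
    exact sub_mem (mem_sup_right (mem_map_of_mem v.2)) (mem_sup_left (starProjection_apply_mem _ _))
  · rintro w ⟨hw, hwV⟩
    obtain ⟨a, ha, _, ⟨c, hc, rfl⟩, rfl⟩ := mem_sup.1 hw
    refine ⟨⟨c, hc⟩, ?_⟩
    -- `a ∈ V` is killed by the projection onto `Vᗮ`, while `a + J c ∈ Vᗮ` is fixed by it.
    rw [normalJ_apply, ← starProjection_eq_self_iff.2 hwV, map_add,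
      (starProjection_apply_eq_zero_iff _).2 (le_orthogonal_orthogonal V ha), zero_add]
    rfl

lemma starProjection_range_normalJ_J_normalJ (hJ : ∀ x, J (J x) = -x)
    [(LinearMap.range (normalJ J V)).HasOrthogonalProjection] (v : V) :
    (LinearMap.range (normalJ J V)).starProjection (J (normalJ J V v)) =
      -normalJ J V (V.orthogonalProjectionOnto (J v)) := by
  refine eq_starProjection_of_mem_orthogonal (neg_mem (LinearMap.mem_range_self _ _)) ?_
  have hV_perp : V ≤ (LinearMap.range (normalJ J V))ᗮ :=
    (le_orthogonal_orthogonal V).trans (orthogonal_le (range_normalJ J V ▸ inf_le_right))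
  have hsum : J (normalJ J V v) - -normalJ J V (V.orthogonalProjectionOnto (J v)) =
      -((v : E) + V.starProjection (J (V.starProjection (J v)))) := by
    simp only [normalJ_apply, ← starProjection_apply, starProjection_orthogonal_val, map_sub, hJ]
    abel
  rw [hsum]
  exact neg_mem (hV_perp (add_mem v.2 (starProjection_apply_mem _ _)))

variable {V} {c : ℝ} (hV : ∀ v ∈ V, ‖V.starProjection (J v)‖ ^ 2 = c * ‖v‖ ^ 2)
include hV

lemma norm_sq_normalJ_of_const (v : V) : ‖normalJ J V v‖ ^ 2 = (1 - c) * ‖(v : E)‖ ^ 2 := by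
  rw [norm_sq_normalJ, hV v v.2]
  ring

lemma injective_normalJ_of_const (hc : c ≠ 1) : Function.Injective (normalJ J V) := by
  rw [← LinearMap.ker_eq_bot, eq_bot_iff]
  intro v hv
  have h := norm_sq_normalJ_of_const J hV v
  rw [LinearMap.mem_ker.1 hv, norm_zero, zero_pow two_ne_zero, eq_comm, mul_eq_zero] at h
  simpa [sub_eq_zero, Ne.symm hc] using h

lemma norm_sq_starProjection_range_normalJ_J (hJ : ∀ x, J (J x) = -x)
    [(LinearMap.range (normalJ J V)).HasOrthogonalProjection] {w : E}
    (hw : w ∈ LinearMap.range (normalJ J V)) :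
    ‖(LinearMap.range (normalJ J V)).starProjection (J w)‖ ^ 2 = c * ‖w‖ ^ 2 := by
  obtain ⟨v, rfl⟩ := hw
  rw [starProjection_range_normalJ_J_normalJ J V hJ, norm_neg, norm_sq_normalJ_of_const J hV,
    norm_sq_normalJ_of_const J hV, ← starProjection_apply, hV v v.2]
  ring

end NormalPart

def complexStructure (n : ℕ) : En n →ₗᵢ[ℝ] En n where
  toFun := Jc
  map_add' x y := smul_add _ x y
  map_smul' r x := smul_comm Complex.I r x
  norm_map' x := by change ‖Complex.I • x‖ = ‖x‖; simp [norm_smul]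

@[simp] lemma complexStructure_apply {n : ℕ} (x : En n) : complexStructure n x = Complex.I • x :=
  rfl

lemma complexStructure_complexStructure {n : ℕ} (x : En n) :
    complexStructure n (complexStructure n x) = -x := by
  simp [smul_smul]

open scoped Pointwise in
lemma cspan_eq_sup_map {n : ℕ} (V : Submodule ℝ (En n)) :
    CSpan V = V ⊔ V.map (complexStructure n).toLinearMap := by
  have hspan : span ℝ ({1, Complex.I} : Set ℂ) = ⊤ := by simpa using RCLike.span_one_I (K := ℂ)
  rw [CSpan, ← span_smul_of_span_eq_top hspan, Set.insert_eq, Set.union_smul, Set.singleton_smul,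
    Set.singleton_smul, one_smul, span_union, span_eq, ← Set.image_smul]
  congr 1
  conv_rhs => rw [← V.span_eq, map_span]
  rfl

/-- If `V` has constant Kähler angle `φ ∈ (0, π/2]`, then `ℂV ⊖ V`, the real
orthogonal complement of `V` in its complex span, has the same real dimension
as `V` and constant Kähler angle `φ`. -/
theorem cspan_ominus_constKahlerAngle (n : ℕ) (V : Submodule ℝ (En n))
    (φ : ℝ) (hφ0 : 0 < φ) (hφ1 : φ ≤ Real.pi / 2)
    (hV : HasConstKahlerAngle V φ) :
    Module.finrank ℝ (CSpan V ⊓ Vᗮ : Submodule ℝ (En n)) = Module.finrank ℝ V ∧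
    HasConstKahlerAngle (CSpan V ⊓ Vᗮ) φ := by
  have hW : CSpan V ⊓ Vᗮ = LinearMap.range (normalJ (complexStructure n) V) := by
    rw [range_normalJ, cspan_eq_sup_map]
  have hVJ : ∀ v ∈ V,
      ‖V.starProjection (complexStructure n v)‖ ^ 2 = Real.cos φ ^ 2 * ‖v‖ ^ 2 := hV
  have hsin : 0 < Real.sin φ := Real.sin_pos_of_pos_of_lt_pi hφ0 (by linarith [Real.pi_pos])
  have hcos : Real.cos φ ^ 2 ≠ 1 := by nlinarith [Real.sin_sq_add_cos_sq φ]
  rw [hW]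
  exact ⟨LinearMap.finrank_range_of_inj (injective_normalJ_of_const _ hVJ hcos),
    fun w hw => norm_sq_starProjection_range_normalJ_J _ hVJ
      complexStructure_complexStructure hw⟩
end
end
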